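/- For all n, m ≥ 0, the sum of the total groves of planar trees of degrees n and m is the total grove of degree n+m: ⋃_{x ∈ T_n, y ∈ T_m} (x + y) = T_{n+m}. -/
import Mathlib


/-- A planar tree: a leaf `|` or a grafting `x⁰ ∨ x¹ ∨ ⋯ ∨ x^k` (`k ≥ 1`) of at
least two planar trees attached to a new root.  The children of
`node first middle last` are `first :: middle ++ [last]`. -/
inductive PT : Type
  | leaf : PT
  | node : PT → List PT → PT → PT

namespace PT

mutual
/-- Number of leaves of a planar tree. -/
def nleaves : PT → ℕ
  | leaf => 1
  | node f m l => nleaves f + nleavesList m + nleaves l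

def nleavesList : List PT → ℕ
  | [] => 0
  | t :: ts => nleaves t + nleavesList ts
end

/-- The degree of a planar tree: its number of leaves minus 1. -/
def deg (t : PT) : ℕ := nleaves t - 1

/-- The set `T n` of planar trees of degree `n`. -/
def T (n : ℕ) : Set PT := {t | t.deg = n}

mutual
/-- Number of internal vertices (grafting nodes) of a planar tree. -/
def nint : PT → ℕ
  | leaf => 0
  | node f m l => nint f + nintList m + nint l + 1

def nintList : List PT → ℕ
  | [] => 0
  | t :: ts => nint t + nintList ts
end

/-- The sum of two planar trees:
`| + y = {y}`, `x + | = {x}` and, for `x = x⁰ ∨ ⋯ ∨ x^k` and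
`y = y⁰ ∨ ⋯ ∨ y^ℓ`, `x + y = (x ⊣ y) ∪ (x ⊥ y) ∪ (x ⊢ y)` where
`x ⊣ y = {x⁰ ∨ ⋯ ∨ x^{k-1} ∨ z : z ∈ x^k + y}`,
`x ⊥ y = {x⁰ ∨ ⋯ ∨ x^{k-1} ∨ z ∨ y¹ ∨ ⋯ ∨ y^ℓ : z ∈ x^k + y⁰}` and
`x ⊢ y = {z ∨ y¹ ∨ ⋯ ∨ y^ℓ : z ∈ x + y⁰}`. -/
def psum : PT → PT → Set PT
  | leaf, y => {y}
  | node xf xm xl, leaf => {node xf xm xl}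
  | node xf xm xl, node yf ym yl =>
      ((fun z => node xf xm z) '' psum xl (node yf ym yl)) ∪
      ((fun z => node xf (xm ++ z :: ym) yl) '' psum xl yf) ∪
      ((fun z => node z ym yl) '' psum (node xf xm xl) yf)
  termination_by x y => sizeOf x + sizeOf y
  decreasing_by all_goals (simp_wf <;> omega)

/-- The left sum `x ⊣ y` of planar trees. -/
def pld : PT → PT → Set PT
  | x, leaf => {x}
  | leaf, _ => {leaf}
  | node xf xm xl, y => (fun z => node xf xm z) '' psum xl y

/-- The middle sum `x ⊥ y` of planar trees. -/
def pmd : PT → PT → Set PT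
  | _, leaf => {leaf}
  | leaf, _ => {leaf}
  | node xf xm xl, node yf ym yl => (fun z => node xf (xm ++ z :: ym) yl) '' psum xl yf

/-- The right sum `x ⊢ y` of planar trees. -/
def prd : PT → PT → Set PT
  | leaf, y => {y}
  | _, leaf => {leaf}
  | x, node yf ym yl => (fun z => node z ym yl) '' psum x yf

/-- A grove of degree `n`: a nonempty subset of `T n`. -/
def Grove (n : ℕ) (A : Set PT) : Prop := A.Nonempty ∧ ∀ x ∈ A, x.deg = n

/-- Sum of groves. -/
def pgsum (A B : Set PT) : Set PT := ⋃ x ∈ A, ⋃ y ∈ B, psum x y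

/-- Left sum of groves. -/
def pgl (A B : Set PT) : Set PT := ⋃ x ∈ A, ⋃ y ∈ B, pld x y

/-- Middle sum of groves. -/
def pgm (A B : Set PT) : Set PT := ⋃ x ∈ A, ⋃ y ∈ B, pmd x y

/-- Right sum of groves. -/
def pgr (A B : Set PT) : Set PT := ⋃ x ∈ A, ⋃ y ∈ B, prd x y

theorem nleaves_pos : ∀ t : PT, 1 ≤ nleaves t
  | leaf => le_refl 1
  | node f m l => by
    have := nleaves_pos f
    simp [nleaves]; omega

theorem nleavesList_append : ∀ a b : List PT,
    nleavesList (a ++ b) = nleavesList a + nleavesList b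
  | [], b => by simp [nleavesList]
  | t :: ts, b => by
    simp [nleavesList, nleavesList_append ts b]; omega

theorem psum_nleaves : ∀ (x y z : PT), z ∈ psum x y →
    nleaves z + 1 = nleaves x + nleaves y
  | leaf, y, z, h => by
    simp [psum] at h; subst h; simp [nleaves]; omega
  | node xf xm xl, leaf, z, h => by
    simp [psum] at h; subst h; simp [nleaves]
  | node xf xm xl, node yf ym yl, z, h => by
    rw [psum] at h
    rcases h with (⟨z', hz', rfl⟩ | ⟨z', hz', rfl⟩) | ⟨z', hz', rfl⟩
    · have := psum_nleaves xl (node yf ym yl) z' hz'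
      simp [nleaves] at this ⊢; omega
    · have := psum_nleaves xl yf z' hz'
      simp [nleaves, nleavesList_append, nleavesList] at this ⊢; omega
    · have := psum_nleaves (node xf xm xl) yf z' hz'
      simp [nleaves] at this ⊢; omega
  termination_by x y => sizeOf x + sizeOf y
  decreasing_by all_goals (simp_wf <;> omega)

theorem split_mid : ∀ (mid : List PT) (F n : ℕ), F ≤ n →
    n + 1 ≤ F + nleavesList mid →
    ∃ xm z ym, mid = xm ++ z :: ym ∧ F + nleavesList xm ≤ n ∧
      n + 1 ≤ F + nleavesList xm + nleaves z := by
  intro mid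
  induction mid with
  | nil => intro F n h1 h2; simp [nleavesList] at h2; omega
  | cons a rest ih =>
    intro F n h1 h2
    by_cases hc : n + 1 ≤ F + nleaves a
    · exact ⟨[], a, rest, rfl, by simpa [nleavesList], by
        simpa [nleavesList] using hc⟩
    · obtain ⟨xm, z, ym, heq, hA, hB⟩ := ih (F + nleaves a) n (by omega)
        (by simp [nleavesList] at h2 ⊢; omega)
      exact ⟨a :: xm, z, ym, by simp [heq], by simp [nleavesList]; omega,
        by simp [nleavesList]; omega⟩

theorem psum_surj : ∀ (N : ℕ) (t : PT), nleaves t ≤ N → ∀ n m : ℕ,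
    deg t = n + m → ∃ x y, deg x = n ∧ deg y = m ∧ t ∈ psum x y := by
  intro N
  induction N with
  | zero => intro t ht; have := nleaves_pos t; omega
  | succ N ih =>
    intro t ht n m hdeg
    rcases Nat.eq_zero_or_pos n with hn | hn
    · subst hn
      refine ⟨leaf, t, by simp [deg, nleaves], by simpa using hdeg, ?_⟩
      simp [psum]
    rcases Nat.eq_zero_or_pos m with hm | hm
    · subst hm
      refine ⟨t, leaf, by simpa using hdeg, by simp [deg, nleaves], ?_⟩
      cases t <;> simp [psum]
    -- now n, m ≥ 1, so t is a node
    match t with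
    | leaf => simp [deg, nleaves] at hdeg; omega
    | node f mid l =>
      have hnt : nleaves (node f mid l) =
          nleaves f + nleavesList mid + nleaves l := by simp [nleaves]
      have hF := nleaves_pos f
      have hL := nleaves_pos l
      have htot : nleaves f + nleavesList mid + nleaves l = n + m + 1 := by
        have h1 := nleaves_pos (node f mid l)
        simp [deg] at hdeg; omega
      have hsz : nleaves f + nleavesList mid + nleaves l ≤ N + 1 := by
        rw [← hnt]; exact ht
      by_cases h1 : nleaves f + nleavesList mid ≤ n
      · -- left sum case
        obtain ⟨xl, y, hxl, hy, hmem⟩ := ih l (by omega)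
          (n - (nleaves f + nleavesList mid)) m (by
            have := nleaves_pos l; simp [deg]; omega)
        match y with
        | leaf => simp [deg, nleaves] at hy; omega
        | node yf ym yl =>
          have hxl' := nleaves_pos xl
          refine ⟨node f mid xl, node yf ym yl, ?_, hy, ?_⟩
          · simp [deg, nleaves] at hxl ⊢; omega
          · rw [psum]; left; left; exact ⟨l, hmem, rfl⟩
      by_cases h2 : n + 1 ≤ nleaves f
      · -- right sum case
        obtain ⟨x, yf, hx, hyf, hmem⟩ := ih f (by omega) n (deg f - n) (by
          simp [deg] at *; omega)
        match x with
        | leaf => simp [deg, nleaves] at hx; omega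
        | node xf xm xl =>
          have hyf' := nleaves_pos yf
          refine ⟨node xf xm xl, node yf mid l, hx, ?_, ?_⟩
          · simp [deg, nleaves] at hyf ⊢; omega
          · rw [psum]; right; exact ⟨f, hmem, rfl⟩
      · -- middle sum case
        obtain ⟨xm, z, ym, heq, hA, hB⟩ := split_mid mid (nleaves f) n
          (by omega) (by omega)
        have hz := nleaves_pos z
        have hMsplit : nleavesList mid =
            nleavesList xm + nleaves z + nleavesList ym := by
          rw [heq, nleavesList_append]; simp [nleavesList]; omega
        obtain ⟨xl, yf, hxl, hyf, hmem⟩ := ih z (by omega)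
          (n - nleaves f - nleavesList xm)
          (nleaves z + nleaves f + nleavesList xm - n - 1) (by
            simp [deg]; omega)
        have hxl' := nleaves_pos xl
        have hyf' := nleaves_pos yf
        refine ⟨node f xm xl, node yf ym l, ?_, ?_, ?_⟩
        · simp [deg, nleaves] at hxl ⊢; omega
        · simp [deg, nleaves] at hyf ⊢; omega
        · rw [heq, psum]; left; right; exact ⟨z, hmem, rfl⟩

end PT

open PT in
/-- `⋃_{x ∈ T_n, y ∈ T_m} (x + y) = T_{n+m}`. -/
theorem ptotal_grove_add (n m : ℕ) :
    (⋃ x ∈ T n, ⋃ y ∈ T m, psum x y) = T (n + m) := by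
  ext t
  simp only [Set.mem_iUnion, T, Set.mem_setOf_eq]
  constructor
  · rintro ⟨x, hx, y, hy, hmem⟩
    have h := psum_nleaves x y t hmem
    have h1 := nleaves_pos x
    have h2 := nleaves_pos y
    have h3 := nleaves_pos t
    simp [deg] at *; omega
  · intro h
    obtain ⟨x, y, hx, hy, hmem⟩ := psum_surj (nleaves t) t le_rfl n m h
    exact ⟨x, hx, y, hy, hmem⟩
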